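/- Let a, b, c be integers with a² - ab + c = -1. Then the graph of f(x) = (x² + bx + c)/(x + a) contains exactly two integral points, namely (-a + 1, b - 2a) and (-a - 1, b - 2a). -/

import Mathlib

/-! Under `a² - ab + c = -1` the numerator factors as
`x² + bx + c = (x + a)(x + b - a) - 1`, so `y = f(x)` becomes `(x + a)(x + b - a - y) = 1`.
Hence `x + a` is a unit of `ℤ`, i.e. `±1`, and both choices give `y = b - 2a`. -/

def integralPoints (a b c : ℤ) : Set (ℤ × ℤ) :=
  {p | p.1 ≠ -a ∧
    (p.2 : ℝ) = ((p.1 : ℝ) ^ 2 + (b : ℝ) * (p.1 : ℝ) + (c : ℝ)) / ((p.1 : ℝ) + (a : ℝ))}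

theorem mem_integralPoints_iff {a b c : ℤ} (h : a ^ 2 - a * b + c = -1) {x y : ℤ} :
    (x, y) ∈ integralPoints a b c ↔ (x + a) * (x + b - a - y) = 1 := by
  constructor
  · rintro ⟨hx, hy⟩
    have hden : (x : ℝ) + a ≠ 0 := by exact_mod_cast (by omega : x + a ≠ 0)
    have hmul : y * (x + a) = x ^ 2 + b * x + c := by
      rw [eq_div_iff hden] at hy
      exact_mod_cast hy
    linear_combination -hmul - h
  · intro hunit
    have hx : x + a ≠ 0 := left_ne_zero_of_mul_eq_one hunit
    have hmul : y * (x + a) = x ^ 2 + b * x + c := by linear_combination -hunit - h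
    refine ⟨by omega, ?_⟩
    rw [eq_div_iff (by exact_mod_cast hx)]
    exact_mod_cast hmul

theorem add_mul_sub_eq_one_iff {a b x y : ℤ} :
    (x + a) * (x + b - a - y) = 1 ↔ (x, y) = (-a + 1, b - 2 * a) ∨ (x, y) = (-a - 1, b - 2 * a) := by
  rw [Int.mul_eq_one_iff_eq_one_or_neg_one, Prod.mk.injEq, Prod.mk.injEq]
  omega

/-- If `a^2 - a*b + c = -1`, the graph of `f(x) = (x^2 + b*x + c)/(x + a)` contains exactly
two integral points: `(-a+1, b-2a)` and `(-a-1, b-2a)`. -/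
theorem integral_points_of_eq_neg_one
    (a b c : ℤ) (h : a ^ 2 - a * b + c = -1) :
    ({p : ℤ × ℤ | p.1 ≠ -a ∧
        (p.2 : ℝ) = ((p.1 : ℝ) ^ 2 + (b : ℝ) * (p.1 : ℝ) + (c : ℝ)) / ((p.1 : ℝ) + (a : ℝ))}
      = ({(-a + 1, b - 2 * a), (-a - 1, b - 2 * a)} : Set (ℤ × ℤ))) ∧
    Set.ncard {p : ℤ × ℤ | p.1 ≠ -a ∧
        (p.2 : ℝ) = ((p.1 : ℝ) ^ 2 + (b : ℝ) * (p.1 : ℝ) + (c : ℝ)) / ((p.1 : ℝ) + (a : ℝ))}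
      = 2 := by
  have hpoints : integralPoints a b c = {(-a + 1, b - 2 * a), (-a - 1, b - 2 * a)} := by
    ext ⟨x, y⟩
    rw [mem_integralPoints_iff h, add_mul_sub_eq_one_iff]
    rfl
  have hdistinct : ((-a + 1, b - 2 * a) : ℤ × ℤ) ≠ (-a - 1, b - 2 * a) := by
    simp only [ne_eq, Prod.mk.injEq]
    omega
  refine ⟨hpoints, ?_⟩
  change (integralPoints a b c).ncard = 2
  rw [hpoints, Set.ncard_pair hdistinct]
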